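/- Let G be a linearly ordered abelian group, n ≥ 2, and H a convex subgroup in the image of 𝔰ₙ with H ≠ ∅. Define G_{≤H} = {a ∈ G : 𝔰ₙ(a) ≤ H} and G_{<H} = {a ∈ G : 𝔰ₙ(a) < H}. Then G_{<H} = H + nG. -/

import Mathlib

/-- A convex subgroup of a linearly ordered abelian group. -/
def IsConvexSubgroup {G : Type*} [AddCommGroup G] [LinearOrder G] [IsOrderedAddMonoid G] (H : AddSubgroup G) : Prop :=
  ∀ ⦃x y : G⦄, 0 ≤ x → x ≤ y → y ∈ H → x ∈ H

/-- The type of convex subgroups, ordered by inclusion. -/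
abbrev ConvexSubgroup (G : Type*) [AddCommGroup G] [LinearOrder G] [IsOrderedAddMonoid G] :=
  {H : AddSubgroup G // IsConvexSubgroup H}

/-- Membership in the set `H + nG`. -/
def memHn {G : Type*} [AddCommGroup G] (H : AddSubgroup G) (n : ℕ) (a : G) : Prop :=
  ∃ h ∈ H, ∃ x : G, a = h + n • x

/-- `IsS n a s` says that `s` (an element of the convex subgroups with a formal least
element `⊥` adjoined) is the value `𝔰ₙ(a)`: it is `⊥` if `a ∈ nG`, and otherwise it is
the largest convex subgroup `H` with `a ∉ H + nG`. -/
def IsS {G : Type*} [AddCommGroup G] [LinearOrder G] [IsOrderedAddMonoid G] (n : ℕ) (a : G)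
    (s : WithBot (ConvexSubgroup G)) : Prop :=
  ((∃ x : G, a = n • x) ∧ s = ⊥) ∨
  (¬ (∃ x : G, a = n • x) ∧ ∃ H : ConvexSubgroup G, s = ↑H ∧ ¬ memHn H.1 n a ∧
      ∀ H' : ConvexSubgroup G, ¬ memHn H'.1 n a → H' ≤ H)

theorem IsConvexSubgroup.le_total {G : Type*} [AddCommGroup G] [LinearOrder G]
    [IsOrderedAddMonoid G] {K₁ K₂ : AddSubgroup G} (h₁ : IsConvexSubgroup K₁)
    (h₂ : IsConvexSubgroup K₂) : K₁ ≤ K₂ ∨ K₂ ≤ K₁ := by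
  by_contra! hc
  obtain ⟨x, hx₁, hx₂⟩ := SetLike.not_le_iff_exists.mp hc.1
  obtain ⟨y, hy₂, hy₁⟩ := SetLike.not_le_iff_exists.mp hc.2
  rcases _root_.le_total |x| |y| with h | h
  · exact hx₂ <| abs_mem_iff.mp <| h₂ (abs_nonneg x) h <| abs_mem_iff.mpr hy₂
  · exact hy₁ <| abs_mem_iff.mp <| h₁ (abs_nonneg y) h <| abs_mem_iff.mpr hx₁

theorem memHn.mono {G : Type*} [AddCommGroup G] {K K' : AddSubgroup G} {n : ℕ} {a : G}
    (ha : memHn K n a) (hK : K ≤ K') : memHn K' n a := by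
  obtain ⟨h, hh, x, rfl⟩ := ha
  exact ⟨h, hK hh, x, rfl⟩

theorem memHn_of_nsmul {G : Type*} [AddCommGroup G] (K : AddSubgroup G) {n : ℕ} {a : G}
    (ha : ∃ x : G, a = n • x) : memHn K n a := by
  obtain ⟨x, rfl⟩ := ha
  exact ⟨0, K.zero_mem, x, (zero_add _).symm⟩

/-- Since convex subgroups form a chain, `a ∉ H + nG` is the same as `H ≤ 𝔰ₙ(a)`. -/
theorem IsS.lt_coe_iff {G : Type*} [AddCommGroup G] [LinearOrder G] [IsOrderedAddMonoid G]
    {n : ℕ} {a : G} {s : WithBot (ConvexSubgroup G)} (hs : IsS n a s) (H : ConvexSubgroup G) :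
    s < ↑H ↔ memHn H.1 n a := by
  rcases hs with ⟨hdiv, rfl⟩ | ⟨-, K, rfl, hK, hmax⟩
  · exact iff_of_true (WithBot.bot_lt_coe H) (memHn_of_nsmul H.1 hdiv)
  rw [WithBot.coe_lt_coe]
  constructor
  · intro hlt
    by_contra hH
    exact hlt.not_ge (hmax H hH)
  · intro hH
    have hHK : ¬ H ≤ K := fun hle => hK (hH.mono hle)
    exact lt_of_le_not_ge ((IsConvexSubgroup.le_total K.2 H.2).resolve_right hHK) hHK

theorem stmt14_general {G : Type*} [AddCommGroup G] [LinearOrder G] [IsOrderedAddMonoid G] (n : ℕ)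
    (s : G → WithBot (ConvexSubgroup G)) (hs : ∀ a : G, IsS n a (s a))
    (H : ConvexSubgroup G) :
    {a : G | s a < ↑H} = {a : G | memHn H.1 n a} :=
  Set.ext fun a => (hs a).lt_coe_iff H

theorem stmt14 {G : Type*} [AddCommGroup G] [LinearOrder G] [IsOrderedAddMonoid G] (n : ℕ) (hn : 2 ≤ n)
    (s : G → WithBot (ConvexSubgroup G)) (hs : ∀ a : G, IsS n a (s a))
    (H : ConvexSubgroup G) (hH : ∃ a : G, s a = ↑H) :
    {a : G | s a < ↑H} = {a : G | memHn H.1 n a} :=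
  stmt14_general n s hs H
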